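/- Let G be a finite group of order n such that every nontrivial complex representation of G has dimension at least k. Let A₁, A₂, A₃, A₁₂, A₁₃, A₂₃ and A₁₂₃ be subsets of G of sizes p₁n, p₂n, p₃n, p₁₂n, p₁₃n, p₂₃n and p₁₂₃n respectively. Then, provided that each of the products p₁p₂p₁₂, p₁p₃p₁₃, p₁p₂₃p₁₂₃ and p₂p₃p₂₃p₁₂p₁₃p₁₂₃ is at least 16/k, there exist elements x₁ ∈ A₁, x₂ ∈ A₂ and x₃ ∈ A₃ such that x₁x₂ ∈ A₁₂, x₃x₁ ∈ A₁₃, x₂x₃⁻¹ ∈ A₂₃ and x₂x₃⁻¹x₁⁻¹ ∈ A₁₂₃. -/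

import Mathlib

/-!
Let `T_A f (x) = ∑_y 1_A(x y⁻¹) f(y)` be convolution by `1_A` on `ℓ²(G)`. It commutes with right
translations, hence so does `T_A* T_A`, and each eigenspace of `T_A* T_A` is a representation of
`G`. An eigenspace that is not pointwise fixed by `G` has dimension at least `k`, while by
Bessel's inequality applied to the rows of `T_A` its eigenvalue times its dimension is at most the
Hilbert–Schmidt norm `n |A|`. A function of mean zero is orthogonal to the fixed vectors (the
constants), so only those eigenspaces see it, and `‖T_A f‖² ≤ (n |A| / k) ‖f‖²`.

For `f = 1_B - |B| / n` this says that the number of ways of writing `x = a b` with `a ∈ A`,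
`b ∈ B` has variance at most `n |A| |B| / k` about its mean `|A| |B| / n`. Two consequences:
if `k |B| |C| |D| > n³` then `x z ∈ B` for some `x ∈ D`, `z ∈ C`; and such a count is below half
its mean for at most `4 n³ / (k |A| |B|)` values of `x`. The density hypotheses therefore give an
`x₁ ∈ A₁` at which the slices `{x₂ ∈ A₂ | x₁ x₂ ∈ A₁₂}`, `{x₃ ∈ A₃ | x₃ x₁ ∈ A₁₃}` and
`{w ∈ A₂₃ | w x₁⁻¹ ∈ A₁₂₃}` all have at least half their expected size, and the first consequence
yields `w` and `x₃` in the last two slices with `x₂ = w x₃` in the first.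
-/

open Finset Module Module.End
open scoped InnerProductSpace Pointwise

def IsQuasirandom (G : Type*) [Group G] (k : ℕ) : Prop :=
  ∀ (d : ℕ) (ρ : G →* Matrix.GeneralLinearGroup (Fin d) ℂ), (∃ g, ρ g ≠ 1) → k ≤ d

namespace IsQuasirandom

variable {G : Type*} [Group G] {k : ℕ}

theorem le_finrank (hG : IsQuasirandom G k) {V : Type*} [AddCommGroup V] [Module ℂ V]
    [FiniteDimensional ℂ V] (ρ : Representation ℂ G V) (hρ : ∃ g, ρ g ≠ 1) :
    k ≤ finrank ℂ V := by
  let e := LinearMap.toMatrixAlgEquiv (Module.finBasis ℂ V)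
  refine hG _ (e.toMonoidHom.comp ρ).toHomUnits ?_
  obtain ⟨g, hg⟩ := hρ
  refine ⟨g, fun h => hg (e.injective ?_)⟩
  simpa using congrArg Units.val h

theorem le_finrank_of_not_le_invariants (hG : IsQuasirandom G k) {V : Type*} [AddCommGroup V]
    [Module ℂ V] [FiniteDimensional ℂ V] {ρ : Representation ℂ G V} {W : Submodule ℂ V}
    (hW : ∀ g, W ≤ W.comap (ρ g)) (h : ¬ W ≤ ρ.invariants) : k ≤ finrank ℂ W := by
  refine hG.le_finrank (ρ.subrepresentation W hW) ?_
  contrapose! h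
  intro v hv g
  simpa using congrArg Subtype.val (LinearMap.congr_fun (h g) ⟨v, hv⟩)

end IsQuasirandom

namespace LinearMap

variable {𝕜 E : Type*} [RCLike 𝕜] [NormedAddCommGroup E] [InnerProductSpace 𝕜 E]
  [FiniteDimensional 𝕜 E]

theorem norm_sq_apply_of_mem_eigenspace_adjoint_mul_self {T : E →ₗ[𝕜] E} {μ : ℝ} {v : E}
    (hv : v ∈ eigenspace (T.adjoint * T) μ) : ‖T v‖ ^ 2 = μ * ‖v‖ ^ 2 := by
  rw [mem_eigenspace_iff, Module.End.mul_apply] at hv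
  have := T.adjoint_inner_right v (T v)
  rw [hv, inner_self_eq_norm_sq_to_K, inner_smul_right, inner_self_eq_norm_sq_to_K] at this
  exact_mod_cast this.symm

theorem mul_finrank_eigenspace_adjoint_mul_self_le {T : E →ₗ[𝕜] E} {C : ℝ}
    (hT : ∀ (d : ℕ) (u : Fin d → E), Orthonormal 𝕜 u → ∑ i, ‖T (u i)‖ ^ 2 ≤ C) (μ : ℝ) :
    μ * finrank 𝕜 (eigenspace (T.adjoint * T) (μ : 𝕜)) ≤ C := by
  set W := eigenspace (T.adjoint * T) (μ : 𝕜)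
  let b := stdOrthonormalBasis 𝕜 W
  calc μ * finrank 𝕜 W = ∑ i, ‖T (b i)‖ ^ 2 := by
        simp [norm_sq_apply_of_mem_eigenspace_adjoint_mul_self (b _).2, ← Submodule.coe_norm,
          b.orthonormal.1 _, mul_comm]
    _ ≤ C := hT _ _ (b.orthonormal.comp_linearIsometry W.subtypeₗᵢ)

theorem norm_sq_apply_eq_sum_eigenvalues (T : E →ₗ[𝕜] E) {n : ℕ} (hn : finrank 𝕜 E = n)
    (f : E) :
    ‖T f‖ ^ 2 = ∑ j, T.isSymmetric_adjoint_mul_self.eigenvalues hn j *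
      ‖⟪T.isSymmetric_adjoint_mul_self.eigenvectorBasis hn j, f⟫_𝕜‖ ^ 2 := by
  set hM := T.isSymmetric_adjoint_mul_self
  set b := hM.eigenvectorBasis hn
  have hb : ∀ j, ⟪b j, (T.adjoint * T) f⟫_𝕜 = hM.eigenvalues hn j * ⟪b j, f⟫_𝕜 := fun j => by
    rw [← hM, hM.apply_eigenvectorBasis, inner_smul_left, RCLike.conj_ofReal]
  have h := b.sum_inner_mul_inner f ((T.adjoint * T) f)
  rw [Module.End.mul_apply, T.adjoint_inner_right, inner_self_eq_norm_sq_to_K] at h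
  simp only [← Module.End.mul_apply, hb, ← inner_conj_symm f,
    mul_left_comm _ (hM.eigenvalues hn _ : 𝕜), RCLike.conj_mul] at h
  exact_mod_cast h.symm

end LinearMap

section UnitaryRepresentation

variable {G E : Type*} [Group G] [NormedAddCommGroup E] [InnerProductSpace ℂ E]
  [FiniteDimensional ℂ E] {ρ : Representation ℂ G E}

theorem Representation.adjoint_apply_eq_apply_inv (hρ : ∀ g u v, ⟪ρ g u, ρ g v⟫_ℂ = ⟪u, v⟫_ℂ)
    (g : G) : (ρ g).adjoint = ρ g⁻¹ := by
  refine ((LinearMap.eq_adjoint_iff _ _).2 fun u v => ?_).symm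
  rw [← hρ g, ρ.self_inv_apply]

theorem Representation.commute_adjoint_mul_self (hρ : ∀ g u v, ⟪ρ g u, ρ g v⟫_ℂ = ⟪u, v⟫_ℂ)
    {T : E →ₗ[ℂ] E} (hT : ∀ g, Commute T (ρ g)) (g : G) : Commute (T.adjoint * T) (ρ g) := by
  have : Commute T.adjoint (ρ g) := by
    simpa [LinearMap.star_eq_adjoint, adjoint_apply_eq_apply_inv hρ] using (hT g⁻¹).star_star
  exact this.mul_left (hT g)

variable {k : ℕ} {T : E →ₗ[ℂ] E} {C : ℝ}

theorem IsQuasirandom.mul_le_of_not_le_invariants (hG : IsQuasirandom G k)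
    (hρ : ∀ g u v, ⟪ρ g u, ρ g v⟫_ℂ = ⟪u, v⟫_ℂ) (hTρ : ∀ g, Commute T (ρ g))
    (hT : ∀ (d : ℕ) (u : Fin d → E), Orthonormal ℂ u → ∑ i, ‖T (u i)‖ ^ 2 ≤ C) {μ : ℝ}
    (hμ : 0 ≤ μ) (h : ¬ eigenspace (T.adjoint * T) (μ : ℂ) ≤ ρ.invariants) : μ * k ≤ C := by
  have hW : ∀ g, eigenspace (T.adjoint * T) (μ : ℂ) ≤ (eigenspace _ _).comap (ρ g) := fun g =>
    mapsTo_genEigenspace_of_comm (ρ.commute_adjoint_mul_self hρ hTρ g) _ 1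
  calc μ * k ≤ μ * finrank ℂ (eigenspace (T.adjoint * T) (μ : ℂ)) := by
        gcongr; exact hG.le_finrank_of_not_le_invariants hW h
    _ ≤ C := LinearMap.mul_finrank_eigenspace_adjoint_mul_self_le hT μ

theorem IsQuasirandom.norm_sq_apply_le (hG : IsQuasirandom G k) (hk : 0 < k)
    (hρ : ∀ g u v, ⟪ρ g u, ρ g v⟫_ℂ = ⟪u, v⟫_ℂ) (hTρ : ∀ g, Commute T (ρ g))
    (hT : ∀ (d : ℕ) (u : Fin d → E), Orthonormal ℂ u → ∑ i, ‖T (u i)‖ ^ 2 ≤ C) {f : E}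
    (hf : f ∈ ρ.invariantsᗮ) : ‖T f‖ ^ 2 ≤ C / k * ‖f‖ ^ 2 := by
  rw [T.norm_sq_apply_eq_sum_eigenvalues rfl,
    ← (T.isSymmetric_adjoint_mul_self.eigenvectorBasis rfl).sum_sq_norm_inner_right f, mul_sum]
  set hM := T.isSymmetric_adjoint_mul_self
  set b := hM.eigenvectorBasis rfl
  refine sum_le_sum fun j _ => ?_
  by_cases hc : ⟪b j, f⟫_ℂ = 0
  · simp [hc]
  have hbj : b j ∈ eigenspace (T.adjoint * T) (hM.eigenvalues rfl j : ℂ) :=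
    mem_eigenspace_iff.2 (hM.apply_eigenvectorBasis rfl j)
  have hμ : 0 ≤ hM.eigenvalues rfl j := by
    have := LinearMap.norm_sq_apply_of_mem_eigenspace_adjoint_mul_self hbj
    rw [b.orthonormal.1 j, one_pow, mul_one] at this
    exact this ▸ sq_nonneg _
  gcongr
  rw [le_div_iff₀ (by exact_mod_cast hk)]
  exact hG.mul_le_of_not_le_invariants hρ hTρ hT hμ
    fun hle => hc ((Submodule.mem_orthogonal _ _).1 hf _ (hle hbj))

end UnitaryRepresentation

theorem Matrix.sum_norm_sq_toLpLin_le {m n 𝕜 ι : Type*} [Fintype m] [Fintype n] [DecidableEq n]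
    [RCLike 𝕜] [Fintype ι] (M : Matrix m n 𝕜) {u : ι → EuclideanSpace 𝕜 n}
    (hu : Orthonormal 𝕜 u) : ∑ i, ‖Matrix.toLpLin 2 2 M (u i)‖ ^ 2 ≤ ∑ x, ∑ y, ‖M x y‖ ^ 2 := by
  let r : m → EuclideanSpace 𝕜 n := fun x => WithLp.toLp 2 fun y => star (M x y)
  have hr : ∀ i x, ‖(Matrix.toLpLin 2 2 M (u i)) x‖ = ‖⟪u i, r x⟫_𝕜‖ := fun i x => by
    rw [← RCLike.norm_conj, ← inner_conj_symm]
    simp [r, PiLp.inner_apply, Matrix.mulVec, dotProduct, mul_comm]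
  calc ∑ i, ‖Matrix.toLpLin 2 2 M (u i)‖ ^ 2 = ∑ x, ∑ i, ‖⟪u i, r x⟫_𝕜‖ ^ 2 := by
        simp_rw [EuclideanSpace.norm_sq_eq, hr]; exact sum_comm
    _ ≤ ∑ x, ‖r x‖ ^ 2 := sum_le_sum fun x _ => Orthonormal.sum_inner_products_le _ hu
    _ = ∑ x, ∑ y, ‖M x y‖ ^ 2 := by simp [r, EuclideanSpace.norm_sq_eq]

section RegularRepresentation

variable {G : Type*} [Group G] [Fintype G]

noncomputable def rightRegular : Representation ℂ G (EuclideanSpace ℂ G) where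
  toFun g := (LinearIsometryEquiv.piLpCongrLeft 2 ℂ ℂ (Equiv.mulRight g).symm).toLinearMap
  map_one' := by ext; simp
  map_mul' g h := by ext; simp [mul_assoc]

@[simp]
theorem rightRegular_apply (g : G) (f : EuclideanSpace ℂ G) (x : G) :
    rightRegular g f x = f (x * g) := by
  simp [rightRegular]

theorem inner_rightRegular (g : G) (u v : EuclideanSpace ℂ G) :
    ⟪rightRegular g u, rightRegular g v⟫_ℂ = ⟪u, v⟫_ℂ :=
  LinearIsometryEquiv.inner_map_map _ _ _

theorem mem_orthogonal_invariants_rightRegular {f : EuclideanSpace ℂ G} (hf : ∑ x, f x = 0) :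
    f ∈ (rightRegular (G := G)).invariantsᗮ := by
  refine (Submodule.mem_orthogonal _ _).2 fun v hv => ?_
  have hc : ∀ x, v x = v 1 := fun x => by
    simpa using congrArg (· 1) (congrArg WithLp.ofLp (hv x))
  simp [PiLp.inner_apply, hc, ← sum_mul, hf]

variable [DecidableEq G]

noncomputable def indicatorConv (A : Finset G) : EuclideanSpace ℂ G →ₗ[ℂ] EuclideanSpace ℂ G :=
  Matrix.toLpLin 2 2 (Matrix.of fun x y => if x * y⁻¹ ∈ A then 1 else 0)

theorem indicatorConv_apply (A : Finset G) (f : EuclideanSpace ℂ G) (x : G) :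
    indicatorConv A f x = ∑ y, if x * y⁻¹ ∈ A then f y else 0 := by
  simp [indicatorConv, Matrix.mulVec, dotProduct]

theorem commute_indicatorConv_rightRegular (A : Finset G) (g : G) :
    Commute (indicatorConv A) (rightRegular g) := by
  ext f x
  simp only [Module.End.mul_apply, indicatorConv_apply, rightRegular_apply]
  exact Fintype.sum_equiv (Equiv.mulRight g) _ _ fun y => by simp [mul_assoc]

theorem card_filter_mul_inv_mem (A : Finset G) (x : G) : #{y | x * y⁻¹ ∈ A} = #A :=
  card_nbij' (fun y => x * y⁻¹) (fun a => a⁻¹ * x) (fun y hy => by simpa using hy)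
    (fun a ha => by simpa using ha) (fun y _ => by simp) (fun a _ => by simp)

theorem sum_norm_sq_indicatorConv_le (A : Finset G) {d : ℕ} {u : Fin d → EuclideanSpace ℂ G}
    (hu : Orthonormal ℂ u) : ∑ i, ‖indicatorConv A (u i)‖ ^ 2 ≤ Fintype.card G * #A := by
  refine (Matrix.sum_norm_sq_toLpLin_le _ hu).trans_eq ?_
  simp [apply_ite, card_filter_mul_inv_mem]

noncomputable def centeredIndicator (B : Finset G) : EuclideanSpace ℂ G :=
  WithLp.toLp 2 fun y => ((if y ∈ B then 1 else 0 : ℝ) - #B / Fintype.card G : ℝ)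

theorem sum_centeredIndicator (B : Finset G) : ∑ y, centeredIndicator B y = 0 := by
  have : (Fintype.card G : ℂ) ≠ 0 := by simp
  simp [centeredIndicator, sum_sub_distrib, apply_ite]
  field_simp
  simp

theorem norm_sq_centeredIndicator_le (B : Finset G) : ‖centeredIndicator B‖ ^ 2 ≤ #B := by
  have hn : (0 : ℝ) < Fintype.card G := by exact_mod_cast Fintype.card_pos
  rw [EuclideanSpace.norm_sq_eq]
  simp only [centeredIndicator, PiLp.toLp_apply, Complex.norm_real, Real.norm_eq_abs, sq_abs]
  simp [sub_sq, sum_add_distrib, sum_sub_distrib, ite_pow, sum_ite_mem]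
  field_simp
  nlinarith

/-- The number of ways of writing `x = a * b` with `a ∈ A` and `b ∈ B`. -/
def repCount (A B : Finset G) (x : G) : ℕ := #{b ∈ B | x * b⁻¹ ∈ A}

theorem indicatorConv_centeredIndicator (A B : Finset G) (x : G) :
    indicatorConv A (centeredIndicator B) x =
      ((repCount A B x - #A * #B / Fintype.card G : ℝ) : ℂ) := by
  simp only [indicatorConv_apply, centeredIndicator, Complex.ofReal_sub,
    apply_ite ((↑) : ℝ → ℂ), Complex.ofReal_one, Complex.ofReal_zero]
  push_cast
  rw [← sum_filter, sum_sub_distrib, sum_const, card_filter_mul_inv_mem, sum_boole, filter_filter,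
    repCount, nsmul_eq_mul, mul_div_assoc]
  congr 3
  ext; simp [and_comm]

variable {k : ℕ}

theorem IsQuasirandom.norm_sq_indicatorConv_le (hG : IsQuasirandom G k) (hk : 0 < k)
    (A : Finset G) {f : EuclideanSpace ℂ G} (hf : ∑ x, f x = 0) :
    ‖indicatorConv A f‖ ^ 2 ≤ Fintype.card G * #A / k * ‖f‖ ^ 2 :=
  hG.norm_sq_apply_le hk inner_rightRegular (commute_indicatorConv_rightRegular A)
    (fun _ _ => sum_norm_sq_indicatorConv_le A) (mem_orthogonal_invariants_rightRegular hf)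

theorem IsQuasirandom.sum_sq_repCount_sub_le (hG : IsQuasirandom G k) (hk : 0 < k)
    (A B : Finset G) :
    ∑ x, ((repCount A B x : ℝ) - #A * #B / Fintype.card G) ^ 2 ≤
      Fintype.card G * #A * #B / k :=
  calc _ = ‖indicatorConv A (centeredIndicator B)‖ ^ 2 := by
        simp only [EuclideanSpace.norm_sq_eq, indicatorConv_centeredIndicator, Complex.norm_real,
          Real.norm_eq_abs, sq_abs]
    _ ≤ Fintype.card G * #A / k * ‖centeredIndicator B‖ ^ 2 :=
        hG.norm_sq_indicatorConv_le hk A (sum_centeredIndicator B)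
    _ ≤ Fintype.card G * #A / k * #B := by gcongr; exact norm_sq_centeredIndicator_le B
    _ = _ := by ring

end RegularRepresentation

theorem card_filter_lt_half_mul_sq_le {ι : Type*} [Fintype ι] {f : ι → ℝ} (hf : ∀ x, 0 ≤ f x)
    (m : ℝ) : #{x | f x < m / 2} * (m / 2) ^ 2 ≤ ∑ x, (f x - m) ^ 2 := by
  rw [← nsmul_eq_mul]
  refine (card_nsmul_le_sum _ _ _ fun x hx => ?_).trans
    (sum_le_sum_of_subset_of_nonneg (subset_univ _) fun _ _ _ => sq_nonneg _)
  have := (mem_filter.1 hx).2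
  nlinarith [hf x]

theorem Finset.exists_mem_notMem_of_four_mul_card_le {α : Type*} [DecidableEq α]
    {s t₁ t₂ t₃ : Finset α} (hs : s.Nonempty) (h₁ : 4 * #t₁ ≤ #s) (h₂ : 4 * #t₂ ≤ #s)
    (h₃ : 4 * #t₃ ≤ #s) : ∃ x ∈ s, x ∉ t₁ ∧ x ∉ t₂ ∧ x ∉ t₃ := by
  have := hs.card_pos
  have := card_union_le (t₁ ∪ t₂) t₃
  have := card_union_le t₁ t₂
  obtain ⟨x, hx, hxt⟩ := exists_mem_notMem_of_card_lt_card (s := t₁ ∪ t₂ ∪ t₃) (t := s) (by omega)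
  exact ⟨x, hx, by simpa [not_or, and_assoc] using hxt⟩

section MixedProducts

variable {G : Type*} [Group G] [Fintype G] [DecidableEq G] {k : ℕ}

theorem IsQuasirandom.four_mul_card_repCount_lt_le (hG : IsQuasirandom G k) (hk : 0 < k)
    (A B : Finset G) (e : G ≃ G) {s : ℝ} (h : 16 * Fintype.card G ^ 3 ≤ k * s * #A * #B) :
    4 * #{x | (repCount A B (e x) : ℝ) < #A * #B / Fintype.card G / 2} ≤ s := by
  set n : ℝ := (Fintype.card G : ℝ)
  have hn : 0 < n := by simp [n, Fintype.card_pos]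
  have hk' : (0 : ℝ) < k := by exact_mod_cast hk
  have hab : 0 < (#A : ℝ) * #B := by
    refine lt_of_le_of_ne (by positivity) fun h0 => ?_
    rw [mul_assoc, ← h0, mul_zero] at h
    linarith [pow_pos hn 3]
  have hvar := ((card_filter_lt_half_mul_sq_le (fun x => Nat.cast_nonneg (repCount A B (e x)))
    (#A * #B / n)).trans_eq (e.sum_comp fun x => ((repCount A B x : ℝ) - #A * #B / n) ^ 2)).trans
    (hG.sum_sq_repCount_sub_le hk A B)
  set L : ℝ := ((#{x | (repCount A B (e x) : ℝ) < #A * #B / n / 2} : ℕ) : ℝ)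
  set P : ℝ := #A * #B
  rw [show n * #A * #B = n * P by ring] at hvar
  rw [show (k : ℝ) * s * #A * #B = k * P * s by ring] at h
  field_simp at hvar
  nlinarith [mul_pos hk' hab]

theorem IsQuasirandom.exists_mul_mem (hG : IsQuasirandom G k) (hk : 0 < k) {B C D : Finset G}
    (h : (Fintype.card G : ℝ) ^ 3 < k * #B * #C * #D) : ∃ x ∈ D, ∃ z ∈ C, x * z ∈ B := by
  by_contra! hBCD
  set n : ℝ := (Fintype.card G : ℝ)
  have hn : 0 < n := by simp [n, Fintype.card_pos]
  have hzero : ∀ x ∈ D, repCount B C⁻¹ x = 0 := fun x hx => by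
    simpa [repCount, filter_eq_empty_iff, Finset.mem_inv'] using fun y hy => hBCD x hx y⁻¹ hy
  have hD : #D * (#B * #C / n) ^ 2 ≤ n * #B * #C / k :=
    calc #D * (#B * #C / n) ^ 2 = ∑ x ∈ D, ((repCount B C⁻¹ x : ℝ) - #B * #C / n) ^ 2 := by
          rw [sum_congr rfl fun x hx => by rw [hzero x hx, Nat.cast_zero, zero_sub, neg_sq]]
          simp
      _ ≤ ∑ x, ((repCount B C⁻¹ x : ℝ) - #B * #C / n) ^ 2 :=
          sum_le_sum_of_subset_of_nonneg (subset_univ D) fun _ _ _ => sq_nonneg _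
      _ ≤ n * #B * #C / k := by simpa using hG.sum_sq_repCount_sub_le hk B C⁻¹
  set P : ℝ := #B * #C
  rw [show n * #B * #C = n * P by ring] at hD
  rw [show (k : ℝ) * #B * #C * #D = k * #D * P by ring] at h
  have hP : 0 < P := by
    refine lt_of_le_of_ne (by positivity) fun h0 => ?_
    rw [← h0, mul_zero] at h
    linarith [pow_pos hn 3]
  field_simp at hD
  nlinarith

theorem IsQuasirandom.exists_mixed_products (hG : IsQuasirandom G k) (hk : 0 < k)
    {A1 A2 A3 A12 A13 A23 A123 : Finset G}
    (h1 : 16 * Fintype.card G ^ 3 ≤ k * (#A1 : ℝ) * #A12 * #A2)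
    (h2 : 16 * Fintype.card G ^ 3 ≤ k * (#A1 : ℝ) * #A13 * #A3)
    (h3 : 16 * Fintype.card G ^ 3 ≤ k * (#A1 : ℝ) * #A123 * #A23)
    (h4 : 16 * Fintype.card G ^ 6 ≤ k * ((#A12 : ℝ) * #A2) * (#A13 * #A3) * (#A123 * #A23)) :
    ∃ x1 ∈ A1, ∃ x2 ∈ A2, ∃ x3 ∈ A3,
      x1 * x2 ∈ A12 ∧ x3 * x1 ∈ A13 ∧ x2 * x3⁻¹ ∈ A23 ∧ x2 * x3⁻¹ * x1⁻¹ ∈ A123 := by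
  set n : ℝ := (Fintype.card G : ℝ)
  have hn : 0 < n := by simp [n, Fintype.card_pos]
  have hA1 : A1.Nonempty := by
    rw [← card_pos, Nat.pos_iff_ne_zero]
    intro h0
    rw [h0, Nat.cast_zero, mul_zero, zero_mul, zero_mul] at h1
    linarith [pow_pos hn 3]
  have hL1 := hG.four_mul_card_repCount_lt_le hk A12 A2⁻¹ (.refl G) (s := #A1) (by simpa using h1)
  have hL2 := hG.four_mul_card_repCount_lt_le hk A13⁻¹ A3 (.inv G) (s := #A1) (by simpa using h2)
  have hL3 := hG.four_mul_card_repCount_lt_le hk A123⁻¹ A23 (.refl G) (s := #A1)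
    (by simpa using h3)
  obtain ⟨x1, hx1, hB, hC, hD⟩ := exists_mem_notMem_of_four_mul_card_le hA1
    (by exact_mod_cast hL1) (by exact_mod_cast hL2) (by exact_mod_cast hL3)
  simp only [mem_filter, mem_univ, true_and, not_lt, card_inv, Equiv.refl_apply,
    Equiv.inv_apply] at hB hC hD
  push_cast at hB hC hD
  -- The slices are parametrised by `x2⁻¹`, `x3` and `x2 * x3⁻¹`; their sizes are `repCount`s.
  obtain ⟨w, hw, z, hz, hwz⟩ := hG.exists_mul_mem hk (B := {y ∈ A2⁻¹ | x1 * y⁻¹ ∈ A12}⁻¹)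
    (C := {z ∈ A3 | x1⁻¹ * z⁻¹ ∈ A13⁻¹}) (D := {w ∈ A23 | x1 * w⁻¹ ∈ A123⁻¹}) <| by
      rw [card_inv]
      calc n ^ 3 < 2 * n ^ 3 := by linarith [pow_pos hn 3]
        _ ≤ k * (#A12 * #A2 / n / 2) * (#A13 * #A3 / n / 2) * (#A123 * #A23 / n / 2) := by
          rw [show (k : ℝ) * (#A12 * #A2 / n / 2) * (#A13 * #A3 / n / 2) * (#A123 * #A23 / n / 2)
            = k * (#A12 * #A2) * (#A13 * #A3) * (#A123 * #A23) / (8 * n ^ 3) by field_simp; ring,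
            le_div_iff₀ (by positivity)]
          nlinarith
        _ ≤ _ := by gcongr <;> assumption
  simp only [mem_filter, Finset.mem_inv', mul_inv_rev, inv_inv] at hw hz hwz
  exact ⟨x1, hx1, w * z, hwz.1, z, hz.1, hwz.2, hz.2, by simpa using hw.1, by simpa using hw.2⟩

end MixedProducts

/-- Theorem 5.7 (Gowers, Quasirandom Groups): if every nontrivial complex
representation of a finite group `G` of order `n` has dimension at least `k`,
and `A₁, A₂, A₃, A₁₂, A₁₃, A₂₃, A₁₂₃ ⊆ G` have densities `p₁, …, p₁₂₃` with
`p₁p₂p₁₂`, `p₁p₃p₁₃`, `p₁p₂₃p₁₂₃`, `p₂p₃p₂₃p₁₂p₁₃p₁₂₃` all at least `16/k`, then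
there exist `x₁ ∈ A₁`, `x₂ ∈ A₂`, `x₃ ∈ A₃` with `x₁x₂ ∈ A₁₂`, `x₃x₁ ∈ A₁₃`,
`x₂x₃⁻¹ ∈ A₂₃` and `x₂x₃⁻¹x₁⁻¹ ∈ A₁₂₃`. -/
theorem simultaneous_mixed_products_three_variables
    (G : Type) [Group G] [Fintype G] (k : ℕ) (hk0 : 0 < k)
    (hrep : ∀ (d : ℕ) (ρ : G →* Matrix.GeneralLinearGroup (Fin d) ℂ),
      (∃ g, ρ g ≠ 1) → k ≤ d)
    (A1 A2 A3 A12 A13 A23 A123 : Finset G)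
    (p1 p2 p3 p12 p13 p23 p123 : ℝ)
    (h1 : (A1.card : ℝ) = p1 * Fintype.card G)
    (h2 : (A2.card : ℝ) = p2 * Fintype.card G)
    (h3 : (A3.card : ℝ) = p3 * Fintype.card G)
    (h12 : (A12.card : ℝ) = p12 * Fintype.card G)
    (h13 : (A13.card : ℝ) = p13 * Fintype.card G)
    (h23 : (A23.card : ℝ) = p23 * Fintype.card G)
    (h123 : (A123.card : ℝ) = p123 * Fintype.card G)
    (hc1 : 16 / (k : ℝ) ≤ p1 * p2 * p12)
    (hc2 : 16 / (k : ℝ) ≤ p1 * p3 * p13)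
    (hc3 : 16 / (k : ℝ) ≤ p1 * p23 * p123)
    (hc4 : 16 / (k : ℝ) ≤ p2 * p3 * p23 * p12 * p13 * p123) :
    ∃ x1 ∈ A1, ∃ x2 ∈ A2, ∃ x3 ∈ A3,
      x1 * x2 ∈ A12 ∧ x3 * x1 ∈ A13 ∧ x2 * x3⁻¹ ∈ A23 ∧ x2 * x3⁻¹ * x1⁻¹ ∈ A123 := by
  classical
  have hk : (0 : ℝ) < k := by exact_mod_cast hk0
  have scale : ∀ {x : ℝ} (j : ℕ), 16 / (k : ℝ) ≤ x →
      16 * (Fintype.card G : ℝ) ^ j ≤ k * x * Fintype.card G ^ j := fun j hx => by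
    rw [div_le_iff₀' hk] at hx
    exact mul_le_mul_of_nonneg_right hx (by positivity)
  refine IsQuasirandom.exists_mixed_products hrep hk0 ?_ ?_ ?_ ?_
  · rw [h1, h12, h2]; linear_combination scale 3 hc1
  · rw [h1, h13, h3]; linear_combination scale 3 hc2
  · rw [h1, h123, h23]; linear_combination scale 3 hc3
  · rw [h12, h2, h13, h3, h123, h23]; linear_combination scale 6 hc4
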